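/- arXiv:1912.04745 — 2 statements merged into one kernel-verified Lean document; each statement's English description precedes it below -/
import Mathlib

section
/- The map (a,b,c,h) ↦ c(a,b,c,h) from F_{p^s} × F_q × F_q × F_p to F_p^{F_q} is injective; consequently the code C consists of exactly p^{5s+1} codewords, i.e., C is an F_p-linear code of length p^m and dimension 5m/2 + 1. -/
/-- `trp p r z = z + z^p + ⋯ + z^(p^(r-1))`, the trace form used for `Tr_r`. -/
def trp (p r : ℕ) {F : Type} [Field F] (z : F) : F :=
  ∑ i ∈ Finset.range r, z ^ p ^ i

/-- The codeword `c(a,b,c,h)` of the code `C`, viewed as a function on `F_q = F`;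
its value at `x` is `Tr_s(a x^(p^s+1)) + Tr_m(b x^(p^l+1) + c x) + h` (the values
lie in the prime field `F_p ⊆ F`). Here `m = 2s`. -/
def cword (p s l : ℕ) {F : Type} [Field F] (a b c : F) (h : ZMod p) : F → F :=
  fun x => trp p s (a * x ^ (p ^ s + 1)) + trp p (2 * s) (b * x ^ (p ^ l + 1) + c * x)
    + ZMod.cast h

section Aux
variable {p : ℕ} [Fact p.Prime] {F : Type} [Field F] [CharP F p]

lemma trp_add (r : ℕ) (x y : F) : trp p r (x + y) = trp p r x + trp p r y := by
  unfold trp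
  rw [← Finset.sum_add_distrib]
  exact Finset.sum_congr rfl fun i _ => by rw [add_pow_char_pow]

lemma trp_sub (r : ℕ) (x y : F) : trp p r (x - y) = trp p r x - trp p r y := by
  unfold trp
  rw [← Finset.sum_sub_distrib]
  exact Finset.sum_congr rfl fun i _ => by rw [sub_pow_char_pow]

lemma trp_zero (r : ℕ) : trp p r (0 : F) = 0 := by
  have hp : p ≠ 0 := (Fact.out : p.Prime).ne_zero
  unfold trp
  rw [Finset.sum_eq_zero]
  intro i _
  exact zero_pow (pow_ne_zero _ hp)

lemma trp_frob (m : ℕ) (x : F) (hx : x ^ p ^ m = x) :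
    trp p m (x ^ p) = trp p m x := by
  unfold trp
  have h1 : ∀ i, (x ^ p) ^ p ^ i = x ^ p ^ (i + 1) := by
    intro i
    rw [← pow_mul, ← pow_succ']
  calc (∑ i ∈ Finset.range m, (x ^ p) ^ p ^ i)
      = ∑ i ∈ Finset.range m, x ^ p ^ (i + 1) := by
        exact Finset.sum_congr rfl fun i _ => h1 i
    _ = (∑ i ∈ Finset.range (m + 1), x ^ p ^ i) - x ^ p ^ 0 := by
        rw [Finset.sum_range_succ' (fun i => x ^ p ^ i) m]; ring
    _ = ∑ i ∈ Finset.range m, x ^ p ^ i := by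
        rw [Finset.sum_range_succ, hx, pow_zero, pow_one]; ring

lemma trp_frob_pow (m k : ℕ) (x : F) (hx : x ^ p ^ m = x) :
    trp p m (x ^ p ^ k) = trp p m x := by
  induction k with
  | zero => rw [pow_zero, pow_one]
  | succ k ih =>
      have h1 : x ^ p ^ (k + 1) = (x ^ p ^ k) ^ p := by
        rw [← pow_mul, pow_succ]
      have h2 : (x ^ p ^ k) ^ p ^ m = x ^ p ^ k := by
        rw [← pow_mul, mul_comm, pow_mul, hx]
      rw [h1, trp_frob m _ h2, ih]

lemma trp_double (s : ℕ) (w : F) (hw : w ^ p ^ s = w) :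
    trp p (2 * s) w = trp p s w + trp p s w := by
  have hper : ∀ j, w ^ p ^ (s + j) = w ^ p ^ j := by
    intro j
    rw [pow_add, pow_mul, hw]
  unfold trp
  rw [two_mul, Finset.range_eq_Ico, ← Finset.sum_Ico_consecutive (fun i => w ^ p ^ i)
    (Nat.zero_le s) (Nat.le_add_right s s), ← Finset.range_eq_Ico,
    Finset.sum_Ico_eq_sum_range]
  simp only [Nat.add_sub_cancel_left]
  congr 1
  exact Finset.sum_congr rfl fun i _ => hper i

lemma vanish [Fintype F] {n : ℕ} (e : Fin n → ℕ) (co : Fin n → F)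
    (he : Function.Injective e) (hlt : ∀ i, e i < Fintype.card F)
    (hz : ∀ x : F, ∑ i, co i * x ^ e i = 0) : ∀ i, co i = 0 := by
  classical
  set P : Polynomial F := ∑ i, Polynomial.C (co i) * Polynomial.X ^ e i with hP
  have heval : ∀ x : F, P.eval x = 0 := by
    intro x
    rw [hP, Polynomial.eval_finset_sum]
    simpa using hz x
  have hcard : 0 < Fintype.card F := Fintype.card_pos
  have hdeg : P.natDegree < Fintype.card F := by
    have : P.natDegree ≤ Fintype.card F - 1 := by
      apply Polynomial.natDegree_sum_le_of_forall_le
      intro i _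
      calc (Polynomial.C (co i) * Polynomial.X ^ e i).natDegree
          ≤ e i := by
            apply le_trans (Polynomial.natDegree_mul_le)
            simp [Polynomial.natDegree_X_pow]
        _ ≤ Fintype.card F - 1 := Nat.le_sub_one_of_lt (hlt i)
    omega
  have hP0 : P = 0 :=
    Polynomial.eq_zero_of_natDegree_lt_card_of_eval_eq_zero P (f := (id : F → F))
      Function.injective_id (fun i => heval i) hdeg
  intro j
  have : P.coeff (e j) = co j := by
    rw [hP, Polynomial.finset_sum_coeff]
    rw [Finset.sum_eq_single j]
    · simp [Polynomial.coeff_C_mul, Polynomial.coeff_X_pow]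
    · intro i _ hij
      simp only [Polynomial.coeff_C_mul, Polynomial.coeff_X_pow]
      rw [if_neg (fun hh => hij (he hh.symm))]
      ring
    · simp
  rw [hP0] at this
  simpa using this.symm

lemma trp_nondeg [Fintype F] (s : ℕ) (hs : 1 ≤ s) (hF : Fintype.card F = p ^ (2 * s))
    (u : F) (h : ∀ y : F, trp p (2 * s) (y * u) = 0) : u = 0 := by
  have hp1 : 1 < p := (Fact.out : p.Prime).one_lt
  have hz : ∀ y : F, ∑ i : Fin (2 * s), u ^ p ^ (i : ℕ) * y ^ p ^ (i : ℕ) = 0 := by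
    intro y
    have hy := h y
    unfold trp at hy
    rw [Fin.sum_univ_eq_sum_range (fun i => u ^ p ^ i * y ^ p ^ i)]
    rw [← hy]
    exact Finset.sum_congr rfl fun i _ => by rw [mul_pow]; ring
  have hv := vanish (F := F) (fun i : Fin (2 * s) => p ^ (i : ℕ))
    (fun i : Fin (2 * s) => u ^ p ^ (i : ℕ))
    (fun i j hij => Fin.val_injective (Nat.pow_right_injective (Fact.out : p.Prime).two_le hij))
    (fun i => by rw [hF]; exact Nat.pow_lt_pow_right hp1 i.isLt) hz
  have h0 := hv ⟨0, by omega⟩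
  simpa using h0

lemma core {s l : ℕ} [Fintype F]
    (hodd : Odd p) (hs : 2 ≤ s) (hl1 : 1 ≤ l) (hls : l ≠ s) (hl2 : l ≤ 2 * s - 1)
    (hF : Fintype.card F = p ^ (2 * s)) (a b c : F) (h : ZMod p)
    (ha : a ^ p ^ s = a) (hz : ∀ x : F, cword p s l a b c h x = 0) :
    a = 0 ∧ b = 0 ∧ c = 0 ∧ h = 0 := by
  have hp : p.Prime := Fact.out
  have hp1 : 1 < p := hp.one_lt
  have h2 : (2 : F) ≠ 0 := by
    have hnd : ¬ (p ∣ 2) := by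
      intro hd
      rcases (Nat.prime_two.eq_one_or_self_of_dvd p hd) with h1 | h1
      · omega
      · rw [h1] at hodd; simp [Nat.odd_iff] at hodd
    intro h2eq
    apply hnd
    exact (CharP.cast_eq_zero_iff F p 2).mp (by exact_mod_cast h2eq)
  have pcard : ∀ x : F, x ^ p ^ (2 * s) = x := fun x => by
    rw [← hF]; exact FiniteField.pow_card x
  -- h = 0
  have h0 := hz 0
  unfold cword at h0
  rw [zero_pow (by omega), zero_pow (by omega), mul_zero, mul_zero, mul_zero,
    add_zero, trp_zero, trp_zero, zero_add, zero_add] at h0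
  have hcastinj : Function.Injective (ZMod.castHom (dvd_refl p) F) :=
    (ZMod.castHom (dvd_refl p) F).injective
  have hh : h = 0 := by
    apply hcastinj
    rw [map_zero, ZMod.castHom_apply]
    exact h0
  -- the trace function vanishes
  have hg : ∀ x : F,
      trp p s (a * x ^ (p ^ s + 1)) + trp p (2 * s) (b * x ^ (p ^ l + 1) + c * x) = 0 := by
    intro x
    have hx := hz x
    unfold cword at hx
    rw [hh] at hx
    simpa using hx
  have hneg : ∀ (k : ℕ) (x : F), (-x) ^ (p ^ k + 1) = x ^ (p ^ k + 1) := fun k x =>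
    Even.neg_pow ((hodd.pow).add_one) x
  -- linear part vanishes
  have hc0 : ∀ x : F, trp p (2 * s) (c * x) = 0 := by
    intro x
    have hx1 := hg x
    have hx2 := hg (-x)
    rw [hneg s x, hneg l x] at hx2
    have e1 : b * x ^ (p ^ l + 1) + c * (-x)
        = (b * x ^ (p ^ l + 1) + c * x) - (c * x + c * x) := by ring
    rw [e1, trp_sub] at hx2
    have e2 : trp p (2 * s) (c * x + c * x) = 0 := by linear_combination hx1 - hx2
    rw [trp_add] at e2
    have e3 : (2 : F) * trp p (2 * s) (c * x) = 0 := by linear_combination e2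
    rcases mul_eq_zero.mp e3 with hcc | hcc
    · exact absurd hcc h2
    · exact hcc
  have hc : c = 0 := by
    apply trp_nondeg s (by omega) hF
    intro y
    rw [mul_comm y c]
    exact hc0 y
  -- quadratic part vanishes
  have hQ : ∀ x : F, trp p s (a * x ^ (p ^ s + 1)) + trp p (2 * s) (b * x ^ (p ^ l + 1)) = 0 := by
    intro x
    have hx1 := hg x
    rw [trp_add] at hx1
    rw [hc0 x, add_zero] at hx1
    exact hx1
  have expand : ∀ (k : ℕ) (x y : F), (x + y) ^ (p ^ k + 1)
      = x ^ (p ^ k + 1) + (x ^ p ^ k * y + y ^ p ^ k * x) + y ^ (p ^ k + 1) := by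
    intro k x y
    rw [pow_succ, add_pow_char_pow]
    ring
  -- polarization
  have hB : ∀ x y : F, trp p s (a * (x ^ p ^ s * y)) + trp p s (a * (y ^ p ^ s * x))
      + (trp p (2 * s) (b * (x ^ p ^ l * y)) + trp p (2 * s) (b * (y ^ p ^ l * x))) = 0 := by
    intro x y
    have h1 := hQ (x + y)
    rw [expand s, expand l] at h1
    simp only [mul_add, trp_add] at h1
    linear_combination h1 - hQ x - hQ y
  -- double the small trace into the big one
  set k := 2 * s - l with hk
  have hlk2 : l + k = 2 * s := by omega
  have hxx : ∀ x : F, (x ^ p ^ s) ^ p ^ s = x := by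
    intro x
    rw [← pow_mul, ← pow_add, ← two_mul]
    exact pcard x
  have e1w : ∀ x y : F, (a * (x ^ p ^ s * y)) ^ p ^ s = a * (x * y ^ p ^ s) := by
    intro x y
    rw [mul_pow, mul_pow, ha, hxx]
  have hw : ∀ x y : F, (a * (x ^ p ^ s * y) + a * (y ^ p ^ s * x)) ^ p ^ s
      = a * (x ^ p ^ s * y) + a * (y ^ p ^ s * x) := by
    intro x y
    rw [add_pow_char_pow, e1w x y, e1w y x]
    ring
  have f1 : ∀ x y : F, trp p (2 * s) (a * (y ^ p ^ s * x))
      = trp p (2 * s) (y * (a * x ^ p ^ s)) := by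
    intro x y
    have ht := trp_frob_pow (2 * s) s (a * (y ^ p ^ s * x)) (pcard _)
    rw [e1w y x] at ht
    rw [← ht]
    congr 1
    ring
  have f2 : ∀ x y : F, trp p (2 * s) (a * (x ^ p ^ s * y))
      = trp p (2 * s) (y * (a * x ^ p ^ s)) := by
    intro x y; congr 1; ring
  have f3 : ∀ x y : F, trp p (2 * s) (b * (x ^ p ^ l * y))
      = trp p (2 * s) (y * (b * x ^ p ^ l)) := by
    intro x y; congr 1; ring
  have f4 : ∀ x y : F, trp p (2 * s) (b * (y ^ p ^ l * x))
      = trp p (2 * s) (y * (b ^ p ^ k * x ^ p ^ k)) := by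
    intro x y
    have hzp : (b * (y ^ p ^ l * x)) ^ p ^ k = y * (b ^ p ^ k * x ^ p ^ k) := by
      rw [mul_pow, mul_pow, ← pow_mul, ← pow_add, hlk2, pcard y]
      ring
    have ht := trp_frob_pow (2 * s) k (b * (y ^ p ^ l * x)) (pcard _)
    rw [hzp] at ht
    exact ht.symm
  have st1 : ∀ x y : F, trp p (2 * s) (a * (x ^ p ^ s * y)) + trp p (2 * s) (a * (y ^ p ^ s * x))
      + (2 * trp p (2 * s) (b * (x ^ p ^ l * y)) + 2 * trp p (2 * s) (b * (y ^ p ^ l * x))) = 0 := by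
    intro x y
    have hdd := trp_double s _ (hw x y)
    have tA := trp_add (p := p) (2 * s) (a * (x ^ p ^ s * y)) (a * (y ^ p ^ s * x))
    have tB := trp_add (p := p) s (a * (x ^ p ^ s * y)) (a * (y ^ p ^ s * x))
    linear_combination 2 * (hB x y) - tA + hdd + 2 * tB
  have stM : ∀ x y : F, trp p (2 * s) (y * ((a + a) * x ^ p ^ s
      + ((b + b) * x ^ p ^ l + (b ^ p ^ k + b ^ p ^ k) * x ^ p ^ k))) = 0 := by
    intro x y
    have e0 : y * ((a + a) * x ^ p ^ s
        + ((b + b) * x ^ p ^ l + (b ^ p ^ k + b ^ p ^ k) * x ^ p ^ k))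
        = (y * (a * x ^ p ^ s) + y * (a * x ^ p ^ s))
          + ((y * (b * x ^ p ^ l) + y * (b * x ^ p ^ l))
            + (y * (b ^ p ^ k * x ^ p ^ k) + y * (b ^ p ^ k * x ^ p ^ k))) := by ring
    rw [e0, trp_add, trp_add, trp_add, trp_add, trp_add]
    linear_combination st1 x y - f1 x y - f2 x y - 2 * f3 x y - 2 * f4 x y
  have hU : ∀ x : F, (a + a) * x ^ p ^ s
      + ((b + b) * x ^ p ^ l + (b ^ p ^ k + b ^ p ^ k) * x ^ p ^ k) = 0 := by
    intro x
    exact trp_nondeg s (by omega) hF _ (fun y => stM x y)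
  -- extract coefficients
  have hdistinct : s ≠ l ∧ s ≠ k ∧ l ≠ k := by omega
  have hpinj : ∀ m n : ℕ, p ^ m = p ^ n → m = n := fun m n hmn =>
    Nat.pow_right_injective hp.two_le hmn
  have hz3 : ∀ x : F, ∑ i : Fin 3,
      (![a + a, b + b, b ^ p ^ k + b ^ p ^ k]) i * x ^ (![p ^ s, p ^ l, p ^ k]) i = 0 := by
    intro x
    rw [Fin.sum_univ_three]
    simp only [Matrix.cons_val_zero, Matrix.cons_val_one, Matrix.head_cons,
      Matrix.cons_val_two, Matrix.tail_cons]
    linear_combination hU x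
  have hvan := vanish (F := F) (![p ^ s, p ^ l, p ^ k]) (![a + a, b + b, b ^ p ^ k + b ^ p ^ k])
    (by
      intro i j hij
      fin_cases i <;> fin_cases j <;>
        simp only [Matrix.cons_val_zero, Matrix.cons_val_one, Matrix.head_cons,
          Matrix.cons_val_two, Matrix.tail_cons, Fin.mk_zero, Fin.mk_one] at hij ⊢ <;>
        first
          | rfl
          | (exact absurd (hpinj _ _ hij) (by omega)))
    (by
      intro i
      rw [hF]
      fin_cases i <;>
        simp only [Matrix.cons_val_zero, Matrix.cons_val_one, Matrix.head_cons,
          Matrix.cons_val_two, Matrix.tail_cons] <;>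
        exact Nat.pow_lt_pow_right hp1 (by omega))
    hz3
  have hA := hvan 0
  have hBB := hvan 1
  simp only [Matrix.cons_val_zero, Matrix.cons_val_one, Matrix.head_cons] at hA hBB
  have ha0 : a = 0 := by
    have : (2 : F) * a = 0 := by linear_combination hA
    rcases mul_eq_zero.mp this with hcc | hcc
    · exact absurd hcc h2
    · exact hcc
  have hb0 : b = 0 := by
    have : (2 : F) * b = 0 := by linear_combination hBB
    rcases mul_eq_zero.mp this with hcc | hcc
    · exact absurd hcc h2
    · exact hcc
  exact ⟨ha0, hb0, hc, hh⟩

end Aux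


lemma card_fixed (p s : ℕ) [Fact p.Prime] {F : Type} [Field F] [Fintype F] [DecidableEq F]
    [CharP F p] (hs : 1 ≤ s) (hF : Fintype.card F = p ^ (2 * s)) :
    (Finset.univ.filter fun a : F => a ^ p ^ s = a).card = p ^ s := by
  classical
  have hp : p.Prime := Fact.out
  have hp1 : 1 < p := hp.one_lt
  have hps1 : 1 ≤ p ^ s := Nat.one_le_pow _ _ (by omega)
  set f : Polynomial F := Polynomial.X ^ (p ^ s) - Polynomial.X with hf
  have hdf : f.natDegree = p ^ s := by
    rw [hf, Polynomial.natDegree_sub_eq_left_of_natDegree_lt, Polynomial.natDegree_X_pow]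
    rw [Polynomial.natDegree_X_pow, Polynomial.natDegree_X]
    have : 1 < p ^ s := Nat.one_lt_pow (by omega) hp1
    omega
  have hf0 : f ≠ 0 := by
    intro hh
    rw [hh, Polynomial.natDegree_zero] at hdf
    omega
  set g : Polynomial F := Polynomial.X ^ (p ^ (2 * s)) - Polynomial.X with hg
  have hgroots : g.roots = Finset.univ.val := by
    rw [hg, ← hF]
    exact FiniteField.roots_X_pow_card_sub_X F
  have hdg : g.natDegree = p ^ (2 * s) := by
    rw [hg, Polynomial.natDegree_sub_eq_left_of_natDegree_lt, Polynomial.natDegree_X_pow]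
    rw [Polynomial.natDegree_X_pow, Polynomial.natDegree_X]
    have : 1 < p ^ (2 * s) := Nat.one_lt_pow (by omega) hp1
    omega
  have hg0 : g ≠ 0 := by
    intro hh
    rw [hh, Polynomial.natDegree_zero] at hdg
    have : 1 < p ^ (2 * s) := Nat.one_lt_pow (by omega) hp1
    omega
  have hfact : g = f * (f ^ (p ^ s - 1) + 1) := by
    have h1 : f * f ^ (p ^ s - 1) = f ^ (p ^ s) := by
      rw [← pow_succ']
      congr 1
      omega
    have h2 : f ^ (p ^ s) = Polynomial.X ^ (p ^ (2 * s)) - Polynomial.X ^ (p ^ s) := by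
      rw [hf, sub_pow_char_pow, ← pow_mul, ← pow_add, ← two_mul]
    rw [mul_add, mul_one, h1, h2, hg, hf]
    ring
  have hdvd : f ∣ g := ⟨_, hfact⟩
  have hle := Polynomial.roots.le_of_dvd hg0 hdvd
  have hnodupg : g.roots.Nodup := by rw [hgroots]; exact Finset.univ.nodup
  have hnodupf : f.roots.Nodup := Multiset.nodup_of_le hle hnodupg
  have hcardg : Multiset.card g.roots = p ^ (2 * s) := by
    rw [hgroots, ← Finset.card_def, Finset.card_univ, hF]
  have hh0 : f ^ (p ^ s - 1) + 1 ≠ 0 := by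
    intro hh
    rw [hfact, hh, mul_zero] at hg0
    exact hg0 rfl
  have hrootsmul : g.roots = f.roots + (f ^ (p ^ s - 1) + 1).roots := by
    rw [hfact]
    exact Polynomial.roots_mul (by rw [← hfact]; exact hg0)
  have hdh : (f ^ (p ^ s - 1) + 1).natDegree = (p ^ s - 1) * p ^ s := by
    rw [show (1 : Polynomial F) = Polynomial.C 1 by simp, Polynomial.natDegree_add_C,
      Polynomial.natDegree_pow, hdf]
  have hcardh : Multiset.card ((f ^ (p ^ s - 1) + 1).roots) ≤ (p ^ s - 1) * p ^ s := by
    rw [← hdh]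
    exact Polynomial.card_roots' _
  have hcardf_le : Multiset.card f.roots ≤ p ^ s := by
    rw [← hdf]
    exact Polynomial.card_roots' f
  have hcardf : Multiset.card f.roots = p ^ s := by
    have hadd : Multiset.card g.roots
        = Multiset.card f.roots + Multiset.card ((f ^ (p ^ s - 1) + 1).roots) := by
      rw [hrootsmul, Multiset.card_add]
    have hq : p ^ (2 * s) = p ^ s * p ^ s := by rw [two_mul, pow_add]
    have h1 : (p ^ s - 1) * p ^ s = p ^ s * p ^ s - p ^ s := by
      rw [Nat.sub_mul, one_mul]
    rw [h1] at hcardh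
    have hle2 : p ^ s ≤ p ^ s * p ^ s := Nat.le_mul_of_pos_left _ (by omega)
    omega
  have hset : Finset.univ.filter (fun a : F => a ^ p ^ s = a) = f.roots.toFinset := by
    ext x
    simp only [Finset.mem_filter, Finset.mem_univ, true_and, Multiset.mem_toFinset,
      Polynomial.mem_roots hf0, Polynomial.IsRoot.def, hf, Polynomial.eval_sub,
      Polynomial.eval_pow, Polynomial.eval_X]
    rw [Polynomial.mem_roots (show (Polynomial.X ^ p ^ s - Polynomial.X : Polynomial F) ≠ 0 from hf0),
      Polynomial.IsRoot.def, Polynomial.eval_sub, Polynomial.eval_pow, Polynomial.eval_X, sub_eq_zero]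
  rw [hset, Multiset.toFinset_card_of_nodup hnodupf, hcardf]



/-- The support of the codeword `c(a,b,c,h)`; its cardinality is the Hamming weight. -/
def suppw (p s l : ℕ) {F : Type} [Field F] [Fintype F] [DecidableEq F]
    (a b c : F) (h : ZMod p) : Finset F :=
  Finset.univ.filter fun x => cword p s l a b c h x ≠ 0

theorem stmt0 (p s l : ℕ) [Fact p.Prime] (F : Type) [Field F] [Fintype F] [DecidableEq F]
    [CharP F p] (hodd : Odd p) (hs : 2 ≤ s) (hl1 : 1 ≤ l) (hls : l ≠ s)
    (hl2 : l ≤ 2 * s - 1) (hF : Fintype.card F = p ^ (2 * s)) :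
    (∀ a b c : F, ∀ h : ZMod p, ∀ a' b' c' : F, ∀ h' : ZMod p,
        a ^ p ^ s = a → a' ^ p ^ s = a' →
        cword p s l a b c h = cword p s l a' b' c' h' →
        a = a' ∧ b = b' ∧ c = c' ∧ h = h') ∧
    (((Finset.univ : Finset (F × F × F × ZMod p)).filter fun t =>
        t.1 ^ p ^ s = t.1).image
          fun t => cword p s l t.1 t.2.1 t.2.2.1 t.2.2.2).card = p ^ (5 * s + 1) := by
  have hp : p.Prime := Fact.out
  have hinjAll : ∀ a b c : F, ∀ h : ZMod p, ∀ a' b' c' : F, ∀ h' : ZMod p,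
      a ^ p ^ s = a → a' ^ p ^ s = a' →
      cword p s l a b c h = cword p s l a' b' c' h' →
      a = a' ∧ b = b' ∧ c = c' ∧ h = h' := by
    intro a b c h a' b' c' h' ha ha' heq
    have hdiff : ∀ x : F, cword p s l (a - a') (b - b') (c - c') (h - h') x = 0 := by
      intro x
      have hx := congrFun heq x
      unfold cword at hx ⊢
      have e1 : (a - a') * x ^ (p ^ s + 1)
          = a * x ^ (p ^ s + 1) - a' * x ^ (p ^ s + 1) := by ring
      have e2 : (b - b') * x ^ (p ^ l + 1) + (c - c') * x
          = (b * x ^ (p ^ l + 1) + c * x) - (b' * x ^ (p ^ l + 1) + c' * x) := by ring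
      have e3 : (ZMod.cast (h - h') : F) = ZMod.cast h - ZMod.cast h' := by
        have := map_sub (ZMod.castHom (dvd_refl p) F) h h'
        simpa [ZMod.castHom_apply] using this
      rw [e1, e2, trp_sub, trp_sub, e3]
      linear_combination hx
    have hafix : (a - a') ^ p ^ s = a - a' := by
      rw [sub_pow_char_pow, ha, ha']
    obtain ⟨k1, k2, k3, k4⟩ := core hodd hs hl1 hls hl2 hF (a - a') (b - b') (c - c')
      (h - h') hafix hdiff
    exact ⟨sub_eq_zero.mp k1, sub_eq_zero.mp k2, sub_eq_zero.mp k3, sub_eq_zero.mp k4⟩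
  refine ⟨hinjAll, ?_⟩
  rw [Finset.card_image_of_injOn]
  · have hsplit : ((Finset.univ : Finset (F × F × F × ZMod p)).filter fun t =>
        t.1 ^ p ^ s = t.1)
        = (Finset.univ.filter fun a : F => a ^ p ^ s = a) ×ˢ
          (Finset.univ : Finset (F × F × ZMod p)) := by
      ext t
      simp [Finset.mem_filter, Finset.mem_product]
    rw [hsplit, Finset.card_product, card_fixed p s (by omega) hF]
    have hZ : Fintype.card (ZMod p) = p := ZMod.card p
    rw [Finset.card_univ, Fintype.card_prod, Fintype.card_prod, hF, hZ]
    rw [← pow_succ, ← pow_add, ← pow_add]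
    congr 1
    omega
  · intro t ht t' ht' hcw
    simp only [Finset.coe_filter, Set.mem_setOf_eq, Finset.mem_coe, Finset.mem_filter,
      Finset.mem_univ, true_and] at ht ht'
    obtain ⟨e1, e2, e3, e4⟩ := hinjAll t.1 t.2.1 t.2.2.1 t.2.2.2 t'.1 t'.2.1 t'.2.2.1 t'.2.2.2
      ht ht' hcw
    exact Prod.ext e1 (Prod.ext e2 (Prod.ext e3 e4))
end

section
/- Let p be a prime, n a positive integer, and let C be an F_p-linear code of length n (an F_p-submodule of F_p^n) with minimum nonzero Hamming weight δ. Let c₁, c₂ ∈ C be two codewords of equal Hamming weight i with δ ≤ i ≤ n and i − ⌊(i + p − 2)/(p − 1)⌋ < δ. If c₁ and c₂ have the same support (the same set of coordinates with nonzero entry), then c₁ = a·c₂ for some a ∈ F_p \ {0}. -/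
theorem stmt19 (p n : ℕ) (hp : p.Prime) (C : Submodule (ZMod p) (Fin n → ZMod p))
    (δ : ℕ)
    (hδmin : ∀ c ∈ C, c ≠ 0 → δ ≤ (Finset.univ.filter fun j => c j ≠ 0).card)
    (hδmem : ∃ c ∈ C, c ≠ 0 ∧ (Finset.univ.filter fun j => c j ≠ 0).card = δ)
    (c₁ c₂ : Fin n → ZMod p) (h₁ : c₁ ∈ C) (h₂ : c₂ ∈ C) (i : ℕ)
    (hw₁ : (Finset.univ.filter fun j => c₁ j ≠ 0).card = i)
    (hw₂ : (Finset.univ.filter fun j => c₂ j ≠ 0).card = i)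
    (hδi : δ ≤ i) (hin : i ≤ n)
    (hcond : i - (i + p - 2) / (p - 1) < δ)
    (hsupp : (Finset.univ.filter fun j => c₁ j ≠ 0)
      = (Finset.univ.filter fun j => c₂ j ≠ 0)) :
    ∃ a : ZMod p, a ≠ 0 ∧ c₁ = a • c₂ := by
  haveI : Fact p.Prime := ⟨hp⟩
  have hp2 : 2 ≤ p := hp.two_le
  -- the support
  set S : Finset (Fin n) := Finset.univ.filter fun j => c₁ j ≠ 0 with hS
  rcases Nat.eq_zero_or_pos i with hi0 | hipos
  · -- i = 0 : both codewords are zero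
    have hc1 : c₁ = 0 := by
      funext j
      simp only [Pi.zero_apply]
      by_contra hj
      have : j ∈ S := by simp [hS, hj]
      rw [Finset.card_eq_zero.mp (hw₁.trans hi0)] at this
      simp at this
    have hc2 : c₂ = 0 := by
      funext j
      simp only [Pi.zero_apply]
      by_contra hj
      have : j ∈ Finset.univ.filter fun j => c₂ j ≠ 0 := by simp [hj]
      rw [Finset.card_eq_zero.mp (hw₂.trans hi0)] at this
      simp at this
    exact ⟨1, one_ne_zero, by simp [hc1, hc2]⟩
  · set m : ℕ := (i + p - 2) / (p - 1) with hm
    set t : Finset (ZMod p) := Finset.univ.filter (fun a => a ≠ 0) with ht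
    have htcard : t.card = p - 1 := by
      have : t = Finset.univ.erase 0 := by
        rw [ht, Finset.filter_ne']
      rw [this, Finset.card_erase_of_mem (Finset.mem_univ _), Finset.card_univ,
        ZMod.card]
    have hmapsto : ∀ j ∈ S, c₁ j * (c₂ j)⁻¹ ∈ t := by
      intro j hj
      have hj2 : c₂ j ≠ 0 := by
        have := hsupp ▸ hj
        simpa using this
      have hj1 : c₁ j ≠ 0 := by simpa [hS] using hj
      simp [ht]
      exact ⟨hj1, hj2⟩
    have hm1 : 1 ≤ m := by
      rw [hm]
      apply Nat.one_le_div_iff (by omega)|>.mpr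
      omega
    have hlt : t.card * (m - 1) < S.card := by
      rw [htcard, hw₁]
      have h1 : m * (p - 1) ≤ i + p - 2 := Nat.div_mul_le_self _ _
      have h2 : (p - 1) * (m - 1) = m * (p-1) - (p-1) := by
        rw [Nat.mul_sub_one, Nat.mul_comm]
      omega
    obtain ⟨a, hat, hacard⟩ :=
      Finset.exists_lt_card_fiber_of_mul_lt_card_of_maps_to hmapsto hlt
    have ha : a ≠ 0 := by simpa [ht] using hat
    refine ⟨a, ha, ?_⟩
    set F : Finset (Fin n) := S.filter (fun j => c₁ j * (c₂ j)⁻¹ = a) with hF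
    have hFS : F ⊆ S := Finset.filter_subset _ _
    have hFcard : m ≤ F.card := by omega
    set d : Fin n → ZMod p := c₁ - a • c₂ with hd
    have hdC : d ∈ C := C.sub_mem h₁ (C.smul_mem a h₂)
    have hdsupp : (Finset.univ.filter fun j => d j ≠ 0) ⊆ S \ F := by
      intro j hj
      simp only [Finset.mem_filter, Finset.mem_univ, true_and] at hj
      have hdj : c₁ j - a * c₂ j ≠ 0 := by simpa [hd] using hj
      by_cases hjS : j ∈ S
      · refine Finset.mem_sdiff.mpr ⟨hjS, ?_⟩
        intro hjF
        have hj2 : c₂ j ≠ 0 := by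
          have := hsupp ▸ hjS
          simpa using this
        have := (Finset.mem_filter.mp hjF).2
        apply hdj
        field_simp at this
        rw [this]
        ring
      · exfalso
        have hj1 : c₁ j = 0 := by
          by_contra h
          exact hjS (by simp [hS, h])
        have hj2 : c₂ j = 0 := by
          by_contra h
          have : j ∈ S := by rw [hsupp]; simp [h]
          exact hjS this
        apply hdj
        simp [hj1, hj2]
    have hdcard : (Finset.univ.filter fun j => d j ≠ 0).card < δ := by
      calc (Finset.univ.filter fun j => d j ≠ 0).card
          ≤ (S \ F).card := Finset.card_le_card hdsupp
        _ = S.card - F.card := Finset.card_sdiff_of_subset hFS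
        _ ≤ i - m := by rw [hw₁]; omega
        _ < δ := hcond
    have hd0 : d = 0 := by
      by_contra h
      exact absurd (hδmin d hdC h) (not_le.mpr hdcard)
    have := sub_eq_zero.mp hd0
    exact this
end
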